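/- For every real x > 0, 1 - Φ(x) > π·φ(x)/((π - 1)x + √(2π + x²)). -/

import Mathlib

/-!
Let `G(x) = 1 - Φ(x) - π φ(x) / D(x)` with `D(x) = (π - 1) x + √(2π + x²)`. Then `G(0) = 0`
(as `D(0) = √(2π)`) and `G(x) → 0` as `x → ∞`. Since `φ' = -x φ`, one computes
`G' = φ N / (√(2π + x²) D²)` with `N(x) = √(2π + x²) A(x) - x B(x)`, where
`A = (π - 2) x² + π (π - 3)` and `B = (π - 2) x² + π (2π - 5)` are positive. Multiplying `N` by
its conjugate `√(2π + x²) A + x B` gives `π² (π - 2) (4 - π) (x*² - x²)`, so `N`, hence `G'`,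
changes sign once, from `+` to `-`, at `x* = √(2π (π - 3)² / ((π - 2) (4 - π)))`.
A function that increases on `[0, x*]`, decreases on `[x*, ∞)` and vanishes at both ends is
positive on `(0, ∞)`.
-/

open MeasureTheory Real

noncomputable def gaussPdf (x : ℝ) : ℝ := Real.exp (-x ^ 2 / 2) / Real.sqrt (2 * Real.pi)

noncomputable def gaussCdf (x : ℝ) : ℝ := ∫ t in Set.Iic x, gaussPdf t

/-- Finite continued fraction `hcf k g x = x + 1/(x + 2/(⋯ + k/(g x)))`,
with `hcf 0 g = g`. -/
noncomputable def hcf : ℕ → (ℝ → ℝ) → ℝ → ℝ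
  | 0, g => g
  | (k + 1), g => hcf k (fun x => x + ((k : ℝ) + 1) / g x)

open Set Filter Topology ProbabilityTheory

theorem hasDerivAt_integral_Iic {E : Type*} [NormedAddCommGroup E] [NormedSpace ℝ E]
    [CompleteSpace E] {f : ℝ → E} (hfi : Integrable f) {x : ℝ} (hfx : ContinuousAt f x) :
    HasDerivAt (fun y ↦ ∫ t in Iic y, f t) (f x) x := by
  have hsplit : ∀ y, ∫ t in Iic y, f t = (∫ t in Iic 0, f t) + ∫ t in 0..y, f t := fun y ↦
    (sub_eq_iff_eq_add').1 (intervalIntegral.integral_Iic_sub_Iic hfi.integrableOn hfi.integrableOn)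
  exact ((intervalIntegral.integral_hasDerivAt_right hfi.intervalIntegrable
    hfi.aestronglyMeasurable.stronglyMeasurableAtFilter hfx).const_add _).congr_of_eventuallyEq
    (Eventually.of_forall hsplit)

lemma gaussPdf_eq_gaussianPDFReal : gaussPdf = gaussianPDFReal 0 1 := by
  ext x
  simp [gaussPdf, gaussianPDFReal_def, div_eq_inv_mul]

lemma gaussPdf_pos (x : ℝ) : 0 < gaussPdf x := by
  rw [gaussPdf_eq_gaussianPDFReal]
  exact gaussianPDFReal_pos _ _ _ one_ne_zero

lemma gaussPdf_neg (x : ℝ) : gaussPdf (-x) = gaussPdf x := by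
  simp [gaussPdf]

lemma continuous_gaussPdf : Continuous gaussPdf := by
  unfold gaussPdf; fun_prop

lemma integrable_gaussPdf : Integrable gaussPdf :=
  gaussPdf_eq_gaussianPDFReal ▸ integrable_gaussianPDFReal 0 1

lemma integral_gaussPdf : ∫ x, gaussPdf x = 1 :=
  gaussPdf_eq_gaussianPDFReal ▸ integral_gaussianPDFReal_eq_one 0 one_ne_zero

lemma hasDerivAt_gaussPdf (x : ℝ) : HasDerivAt gaussPdf (-x * gaussPdf x) x := by
  have h : HasDerivAt (fun y : ℝ ↦ -y ^ 2 / 2) (-x) x :=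
    ((hasDerivAt_pow 2 x).neg.div_const 2).congr_deriv (by ring)
  exact (h.exp.div_const (√(2 * π))).congr_deriv (by unfold gaussPdf; ring)

lemma tendsto_gaussPdf_atTop : Tendsto gaussPdf atTop (𝓝 0) := by
  have h : Tendsto (fun x : ℝ ↦ -x ^ 2 / 2) atTop atBot :=
    (tendsto_neg_atTop_atBot.comp (tendsto_pow_atTop two_ne_zero)).atBot_div_const two_pos
  have := (tendsto_exp_atBot.comp h).div_const (√(2 * π))
  rwa [zero_div] at this

lemma one_sub_gaussCdf (x : ℝ) : 1 - gaussCdf x = ∫ t in Ioi x, gaussPdf t := by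
  rw [← integral_gaussPdf, gaussCdf, ← intervalIntegral.integral_Iic_add_Ioi
    integrable_gaussPdf.integrableOn integrable_gaussPdf.integrableOn]
  ring

lemma gaussCdf_zero : gaussCdf 0 = 1 / 2 := by
  have hsymm : gaussCdf 0 = ∫ t in Ioi 0, gaussPdf t := by
    rw [gaussCdf]
    simpa [gaussPdf_neg] using integral_comp_neg_Iic 0 gaussPdf
  linarith [one_sub_gaussCdf 0]

lemma hasDerivAt_gaussCdf (x : ℝ) : HasDerivAt gaussCdf (gaussPdf x) x :=
  hasDerivAt_integral_Iic integrable_gaussPdf continuous_gaussPdf.continuousAt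

lemma tendsto_one_sub_gaussCdf_atTop : Tendsto (fun x ↦ 1 - gaussCdf x) atTop (𝓝 0) := by
  simpa only [one_sub_gaussCdf] using tendsto_integral_Ioi_zero (b := fun x ↦ x) tendsto_id

theorem StrictMonoOn.pos_of_strictAntiOn {f : ℝ → ℝ} {a b c x : ℝ}
    (hinc : StrictMonoOn f (Icc a b)) (hdec : StrictAntiOn f (Ici b)) (ha : f a = c)
    (hlim : Tendsto f atTop (𝓝 c)) (hx : a < x) : c < f x := by
  rcases le_or_gt x b with hxb | hbx
  · exact ha ▸ hinc ⟨le_rfl, hx.le.trans hxb⟩ ⟨hx.le, hxb⟩ hx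
  · have hx1 : x + 1 ∈ Ici b := by simp only [mem_Ici]; linarith
    have htail : c ≤ f (x + 1) := le_of_tendsto hlim <| by
      filter_upwards [eventually_ge_atTop (x + 1)] with y hy
      exact hdec.antitoneOn hx1 (mem_Ici.2 (hx1.trans hy)) hy
    exact htail.trans_lt (hdec (mem_Ici.2 hbx.le) hx1 (lt_add_one x))

noncomputable def boundDenom (x : ℝ) : ℝ := (π - 1) * x + √(2 * π + x ^ 2)

noncomputable def tailGap (x : ℝ) : ℝ := (1 - gaussCdf x) - π * gaussPdf x / boundDenom x

noncomputable def tailGapNumer (x : ℝ) : ℝ :=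
  √(2 * π + x ^ 2) * ((π - 2) * x ^ 2 + π * (π - 3)) - x * ((π - 2) * x ^ 2 + π * (2 * π - 5))

noncomputable def tailGapPeak : ℝ := √(2 * π * (π - 3) ^ 2 / ((π - 2) * (4 - π)))

lemma boundDenom_pos {x : ℝ} (hx : 0 ≤ x) : 0 < boundDenom x := by
  have h1 : 0 ≤ (π - 1) * x := mul_nonneg (by linarith [pi_gt_three]) hx
  have h2 : 0 < √(2 * π + x ^ 2) := sqrt_pos.2 (by positivity)
  unfold boundDenom; linarith

lemma hasDerivAt_boundDenom (x : ℝ) :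
    HasDerivAt boundDenom (π - 1 + x / √(2 * π + x ^ 2)) x := by
  have hsq : HasDerivAt (fun y ↦ 2 * π + y ^ 2) (2 * x) x := by
    simpa using (hasDerivAt_pow 2 x).const_add (2 * π)
  have hu := hsq.sqrt (show (0:ℝ) < 2 * π + x ^ 2 by positivity).ne'
  refine (((hasDerivAt_id x).const_mul (π - 1)).add hu).congr_deriv ?_
  field_simp

lemma hasDerivAt_tailGap {x : ℝ} (hx : 0 ≤ x) :
    HasDerivAt tailGap
      (gaussPdf x * tailGapNumer x / (√(2 * π + x ^ 2) * boundDenom x ^ 2)) x := by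
  have hD := boundDenom_pos hx
  have hu2 : √(2 * π + x ^ 2) ^ 2 = 2 * π + x ^ 2 := sq_sqrt (by positivity)
  have hnumer : -√(2 * π + x ^ 2) * boundDenom x ^ 2 + π * x * √(2 * π + x ^ 2) * boundDenom x
      + π * ((π - 1) * √(2 * π + x ^ 2) + x) = tailGapNumer x := by
    rw [tailGapNumer, boundDenom]
    linear_combination ((2 - π) * x - √(2 * π + x ^ 2)) * hu2
  refine (((hasDerivAt_gaussCdf x).const_sub 1).sub
    (((hasDerivAt_gaussPdf x).const_mul π).div (hasDerivAt_boundDenom x) hD.ne')).congr_deriv ?_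
  rw [← hnumer]
  field_simp
  ring

lemma tailGapNumer_mul_eq (x : ℝ) :
    tailGapNumer x * (√(2 * π + x ^ 2) * ((π - 2) * x ^ 2 + π * (π - 3))
      + x * ((π - 2) * x ^ 2 + π * (2 * π - 5))) =
      π ^ 2 * ((π - 2) * (4 - π)) * (tailGapPeak ^ 2 - x ^ 2) := by
  have hπ2 : π - 2 ≠ 0 := by linarith [pi_gt_three]
  have hπ4 : 4 - π ≠ 0 := by linarith [pi_lt_four]
  have hu2 : √(2 * π + x ^ 2) ^ 2 = 2 * π + x ^ 2 := sq_sqrt (by positivity)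
  have hpeak : π ^ 2 * ((π - 2) * (4 - π)) * tailGapPeak ^ 2 = 2 * π ^ 3 * (π - 3) ^ 2 := by
    rw [tailGapPeak, sq_sqrt (div_nonneg (by positivity) (by nlinarith [pi_gt_three, pi_lt_four]))]
    field_simp
  rw [mul_sub (π ^ 2 * ((π - 2) * (4 - π))), hpeak, tailGapNumer]
  linear_combination ((π - 2) * x ^ 2 + π * (π - 3)) ^ 2 * hu2

lemma exists_pos_tailGapNumer_mul_eq {x : ℝ} (hx : 0 ≤ x) :
    ∃ S > 0, ∃ K > 0, tailGapNumer x * S = K * (tailGapPeak ^ 2 - x ^ 2) := by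
  have hκ : 0 < (π - 2) * (4 - π) := mul_pos (by linarith [pi_gt_three]) (by linarith [pi_lt_four])
  have hA : 0 < (π - 2) * x ^ 2 + π * (π - 3) := by nlinarith [pi_gt_three, sq_nonneg x]
  have hB : 0 < (π - 2) * x ^ 2 + π * (2 * π - 5) := by nlinarith [pi_gt_three, sq_nonneg x]
  have hu : 0 < √(2 * π + x ^ 2) := sqrt_pos.2 (by positivity)
  exact ⟨_, by positivity, _, by positivity, tailGapNumer_mul_eq x⟩

lemma tailGapNumer_pos {x : ℝ} (hx₀ : 0 ≤ x) (hx : x < tailGapPeak) : 0 < tailGapNumer x := by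
  obtain ⟨S, hS, K, hK, h⟩ := exists_pos_tailGapNumer_mul_eq hx₀
  have hsq : 0 < tailGapPeak ^ 2 - x ^ 2 := sub_pos.2 (pow_lt_pow_left₀ hx hx₀ two_ne_zero)
  exact pos_of_mul_pos_left (h ▸ mul_pos hK hsq) hS.le

lemma tailGapNumer_neg {x : ℝ} (hx : tailGapPeak < x) : tailGapNumer x < 0 := by
  obtain ⟨S, hS, K, hK, h⟩ := exists_pos_tailGapNumer_mul_eq ((sqrt_nonneg _).trans hx.le)
  have hsq : tailGapPeak ^ 2 - x ^ 2 < 0 :=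
    sub_neg.2 (pow_lt_pow_left₀ hx (sqrt_nonneg _) two_ne_zero)
  exact neg_of_mul_neg_left (h ▸ mul_neg_of_pos_of_neg hK hsq) hS.le

lemma continuousOn_tailGap {s : Set ℝ} (hs : s ⊆ Ici 0) : ContinuousOn tailGap s :=
  fun _ hx ↦ (hasDerivAt_tailGap (hs hx)).continuousAt.continuousWithinAt

lemma strictMonoOn_tailGap : StrictMonoOn tailGap (Icc 0 tailGapPeak) := by
  refine strictMonoOn_of_deriv_pos (convex_Icc _ _) (continuousOn_tailGap fun x hx ↦ hx.1) ?_
  intro x hx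
  rw [interior_Icc] at hx
  rw [(hasDerivAt_tailGap hx.1.le).deriv]
  have := gaussPdf_pos x
  have := tailGapNumer_pos hx.1.le hx.2
  have := boundDenom_pos hx.1.le
  have : 0 < √(2 * π + x ^ 2) := sqrt_pos.2 (by positivity)
  positivity

lemma strictAntiOn_tailGap : StrictAntiOn tailGap (Ici tailGapPeak) := by
  refine strictAntiOn_of_deriv_neg (convex_Ici _)
    (continuousOn_tailGap fun x hx ↦ (sqrt_nonneg _).trans hx) ?_
  intro x hx
  rw [interior_Ici] at hx
  have hx₀ : 0 < x := (sqrt_nonneg _).trans_lt hx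
  rw [(hasDerivAt_tailGap hx₀.le).deriv]
  have := boundDenom_pos hx₀.le
  have : 0 < √(2 * π + x ^ 2) := sqrt_pos.2 (by positivity)
  exact div_neg_of_neg_of_pos (mul_neg_of_pos_of_neg (gaussPdf_pos x) (tailGapNumer_neg hx))
    (by positivity)

lemma tailGap_zero : tailGap 0 = 0 := by
  norm_num [tailGap, boundDenom, gaussPdf, gaussCdf_zero]
  field_simp
  rw [sq_sqrt pi_pos.le, sq_sqrt zero_le_two]
  ring

lemma tendsto_tailGap_atTop : Tendsto tailGap atTop (𝓝 0) := by
  have hD : Tendsto boundDenom atTop atTop :=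
    tendsto_atTop_mono (fun x ↦ le_add_of_nonneg_right (sqrt_nonneg _))
      (tendsto_id.const_mul_atTop (by linarith [pi_gt_three]))
  have := tendsto_one_sub_gaussCdf_atTop.sub ((tendsto_gaussPdf_atTop.const_mul π).div_atTop hD)
  rwa [sub_zero] at this

/-- The new lower bound (LB1). -/
theorem new_lower_bound (x : ℝ) (hx : 0 < x) :
    1 - gaussCdf x >
      Real.pi * gaussPdf x / ((Real.pi - 1) * x + Real.sqrt (2 * Real.pi + x ^ 2)) :=
  sub_pos.1 (strictMonoOn_tailGap.pos_of_strictAntiOn strictAntiOn_tailGap tailGap_zero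
    tendsto_tailGap_atTop hx)
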